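/- Let G = ℤ^ℓ with a total additive ordering ⪯ admitting a minimal positive element. Let T₋ : G×G → G be translation equivariant, nondecreasing in each argument with respect to ⪯, and such that T₊(x,y) = x+y−T₋(x,y) is also nondecreasing in each argument. Let α, β, γ, δ > 0 with max{α,β} ≤ min{γ,δ}. Let μ and ν be finitely supported probability measures on G and let π be the monotone coupling of μ and ν with respect to ⪯. Then, with κ₋ = π∘T₋⁻¹ and κ₊ = π∘T₊⁻¹ the push-forwards of π by T₋ and T₊, one has α·H(μ|m) + β·H(ν|m) ≥ γ·H(κ₋|m) + δ·H(κ₊|m). -/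

import Mathlib

open scoped BigOperators ENNReal NNReal

/-- A *total additive ordering* on an abelian group `G`: a linear order (given as
a relation `r`, meaning `r a b ↔ a ⪯ b`) compatible with addition. -/
def TotalAdditiveOrdering {G : Type*} [AddCommGroup G] (r : G → G → Prop) : Prop :=
  (∀ a, r a a) ∧ (∀ a b, r a b → r b a → a = b) ∧
  (∀ a b c, r a b → r b c → r a c) ∧ (∀ a b, r a b ∨ r b a) ∧
  (∀ a b c, r a b → r (a + c) (b + c))

/-- `u` is the minimal positive element of the ordering `r`, i.e. the minimum of
`{g : 0 ≺ g}`. -/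
def IsMinimalPositive {G : Type*} [AddCommGroup G] (r : G → G → Prop) (u : G) : Prop :=
  (r 0 u ∧ u ≠ 0) ∧ ∀ g, r 0 g → g ≠ 0 → r u g

/-- `T` is translation equivariant: `T (x+z) (y+z) = T x y + z`. -/
def TranslationEquivariant {G : Type*} [AddCommGroup G] (T : G → G → G) : Prop :=
  ∀ x y z, T (x + z) (y + z) = T x y + z

/-- A finitely supported probability measure on `A`, viewed as its density. -/
def IsPMF {A : Type*} (μ : A → ℝ) : Prop :=
  (∀ x, 0 ≤ μ x) ∧ (Function.support μ).Finite ∧ ∑ᶠ x, μ x = 1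

/-- Relative entropy `H(μ | m)` of a finitely supported probability measure with respect to
the counting measure `m`: `∑ₓ μ(x) log μ(x)` (note `Real.log 0 = 0`, so `0 · log 0 = 0`). -/
noncomputable def relEntropy {A : Type*} (μ : A → ℝ) : ℝ :=
  ∑ᶠ x, μ x * Real.log (μ x)

/-- Push-forward `π ∘ T⁻¹` of a (finitely supported) measure `π` by the map `T`. -/
noncomputable def pushforward {A B : Type*} (T : A → B) (π : A → ℝ) : B → ℝ :=
  fun z => ∑ᶠ p ∈ {p : A | T p = z}, π p

/-- Cumulative distribution function `F_μ(x) = μ {g : g ⪯ x}` of `μ` with respect to the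
ordering `r`. -/
noncomputable def cdf {A : Type*} (r : A → A → Prop) (μ : A → ℝ) (x : A) : ℝ :=
  ∑ᶠ g ∈ {g | r g x}, μ g

open Classical in
/-- Generalized inverse `F_μ⁻¹(t) = min {x : F_μ(x) ≥ t}`, the minimum taken with respect to
the ordering `r` (junk value `0` if the minimum does not exist). -/
noncomputable def genInv {A : Type*} [Zero A] (r : A → A → Prop) (μ : A → ℝ) (t : ℝ) : A :=
  if h : ∃ x, t ≤ cdf r μ x ∧ ∀ y, t ≤ cdf r μ y → r x y then h.choose else 0

/-- The monotone coupling of `μ` and `ν` with respect to the ordering `r`: the law of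
`(F_μ⁻¹(U), F_ν⁻¹(U))` where `U` is uniformly distributed on `(0,1)`. -/
noncomputable def monotoneCoupling {A : Type*} [Zero A] (r : A → A → Prop) (μ ν : A → ℝ) :
    A × A → ℝ := fun p =>
  (MeasureTheory.volume.restrict (Set.Ioo (0 : ℝ) 1)
    {t : ℝ | genInv r μ t = p.1 ∧ genInv r ν t = p.2}).toReal

/-!
The monotone coupling `π` is the law of `(F_μ⁻¹(U), F_ν⁻¹(U))`, so its marginals are `μ` and `ν`
and its support is a chain for the product order. On such a chain `(T₋, T₊)` is injective, since
`T₋ + T₊ = x + y`, and the minimal positive element `u` forces every fiber of `T₋` or of `T₊` to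
lie in a fiber of one of the two coordinates: otherwise `(x + u, y + u) ⪯ (x', y')` for two of its
points. Writing `A, B, C, D` for the masses of the fibers of the two coordinates, `T₋` and `T₊`
through a point, `H(κ₋) + H(κ₊) - H(μ) - H(ν) = ∑ π log (CD / AB) ≤ ∑ π (CD / AB - 1) ≤ 0`, the
last step by counting within each fiber of `T₋`. All four entropies are nonpositive, so the
weights with `max α β ≤ min γ δ` only help.
-/

open Function

theorem Finset.exists_forall_rel {A : Type*} {r : A → A → Prop} [IsTrans A r] [Std.Total r]
    {s : Finset A} (hs : s.Nonempty) : ∃ m ∈ s, ∀ x ∈ s, r x m := by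
  let : LE A := ⟨r⟩
  obtain ⟨m, hm, hmax⟩ := s.exists_maximal hs
  exact ⟨m, hm, fun x hx => (total_of r x m).elim id (hmax hx)⟩

lemma forall_eq_or_forall_eq_of_pairwise {ι α β : Type*} {a : ι → α} {b : ι → β} {t : Set ι}
    (h : ∀ j ∈ t, ∀ k ∈ t, a j = a k ∨ b j = b k) {k₀ : ι} (hk₀ : k₀ ∈ t) :
    (∀ j ∈ t, a j = a k₀) ∨ (∀ j ∈ t, b j = b k₀) := by
  by_contra! ⟨⟨j₁, hj₁, ha⟩, j₂, hj₂, hb⟩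
  have hb₁ := (h j₁ hj₁ k₀ hk₀).resolve_left ha
  have ha₂ := (h j₂ hj₂ k₀ hk₀).resolve_right hb
  rcases h j₁ hj₁ j₂ hj₂ with h₁₂ | h₁₂
  · exact ha (h₁₂.trans ha₂)
  · exact hb (h₁₂.symm.trans hb₁)

section FiberMass

open Finset

variable {ι α₁ α₂ γ₁ γ₂ : Type*} [DecidableEq α₁] [DecidableEq α₂] [DecidableEq γ₁]
  [DecidableEq γ₂] {s : Finset ι} {p : ι → ℝ}

def fiberMass (s : Finset ι) (p : ι → ℝ) (f : ι → α₁) (z : α₁) : ℝ :=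
  ∑ j ∈ s with f j = z, p j

lemma le_fiberMass (hp : ∀ j ∈ s, 0 ≤ p j) (f : ι → α₁) {k : ι} (hk : k ∈ s) :
    p k ≤ fiberMass s p f (f k) :=
  single_le_sum (fun j hj => hp j (mem_filter.1 hj).1) (mem_filter.2 ⟨hk, rfl⟩)

lemma fiberMass_pos (hp : ∀ j ∈ s, 0 ≤ p j) (f : ι → α₁) {k : ι} (hk : k ∈ s) (hpk : 0 < p k) :
    0 < fiberMass s p f (f k) :=
  hpk.trans_le (le_fiberMass hp f hk)

lemma fiberMass_le_fiberMass (hp : ∀ j ∈ s, 0 ≤ p j) {f : ι → α₁} {g : ι → α₂} {k : ι}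
    (h : ∀ j ∈ s, f j = f k → g j = g k) : fiberMass s p f (f k) ≤ fiberMass s p g (g k) :=
  sum_le_sum_of_subset_of_nonneg
    (fun j hj => mem_filter.2 ⟨(mem_filter.1 hj).1, h j (mem_filter.1 hj).1 (mem_filter.1 hj).2⟩)
    (fun j hj _ => hp j (mem_filter.1 hj).1)

lemma support_fiberMass_subset (f : ι → α₁) : support (fiberMass s p f) ⊆ ↑(s.image f) := by
  intro z hz
  obtain ⟨j, hj, -⟩ := exists_ne_zero_of_sum_ne_zero hz
  exact mem_image.2 ⟨j, (mem_filter.1 hj).1, (mem_filter.1 hj).2⟩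

lemma sum_fiberMass_image (f : ι → α₁) : ∑ z ∈ s.image f, fiberMass s p f z = ∑ k ∈ s, p k :=
  sum_fiberwise_of_maps_to (fun _ => mem_image_of_mem f) p

variable {a : ι → α₁} {b : ι → α₂} {c : ι → γ₁} {d : ι → γ₂}

/-- The `k`-th term is at most the mass of `G k` divided by the mass `W` of the `a`-fiber, where
`G k` is the `d`-fiber of `k` if that lies in the `a`-fiber, and `{k}` otherwise (then the
`d`-fiber lies in the `b`-fiber of `k`). The sets `G k` are disjoint since `(c, d)` is injective,
and all lie in the `a`-fiber. -/
lemma sum_fiber_le_one_of_forall_eq (hp : ∀ k ∈ s, 0 < p k)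
    (hcd : ∀ j ∈ s, ∀ k ∈ s, c j = c k → d j = d k → j = k)
    (hd : ∀ j ∈ s, ∀ k ∈ s, d j = d k → a j = a k ∨ b j = b k)
    {k₀ : ι} (hk₀ : k₀ ∈ s) (ha : ∀ k ∈ s, c k = c k₀ → a k = a k₀) :
    ∑ k ∈ s with c k = c k₀,
      p k * fiberMass s p d (d k) / (fiberMass s p a (a k) * fiberMass s p b (b k)) ≤ 1 := by
  classical
  have hp0 : ∀ k ∈ s, 0 ≤ p k := fun k hk => (hp k hk).le
  set F := s.filter (c · = c k₀)
  set W := fiberMass s p a (a k₀)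
  have hW : 0 < W := fiberMass_pos hp0 a hk₀ (hp k₀ hk₀)
  have hF : ∀ k ∈ F, k ∈ s ∧ c k = c k₀ := fun k hk => mem_filter.1 hk
  let G : ι → Finset ι := fun k =>
    if ∀ i ∈ s, d i = d k → a i = a k₀ then s.filter (d · = d k) else {k}
  have hG_d : ∀ k, ∀ i ∈ G k, d i = d k := by
    intro k i hi
    simp only [G] at hi
    split_ifs at hi
    · exact (mem_filter.1 hi).2
    · rw [mem_singleton.1 hi]
  have hG_sub : ∀ k ∈ F, G k ⊆ s.filter (a · = a k₀) := by
    intro k hk i hi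
    simp only [G] at hi
    split_ifs at hi with h
    · obtain ⟨his, hid⟩ := mem_filter.1 hi
      exact mem_filter.2 ⟨his, h i his hid⟩
    · rw [mem_singleton.1 hi]
      exact mem_filter.2 ⟨(hF k hk).1, ha k (hF k hk).1 (hF k hk).2⟩
  have hterm : ∀ k ∈ F, p k * fiberMass s p d (d k) /
      (fiberMass s p a (a k) * fiberMass s p b (b k)) ≤ (∑ i ∈ G k, p i) / W := by
    intro k hk
    obtain ⟨hks, hkc⟩ := hF k hk
    have hA : fiberMass s p a (a k) = W := by rw [ha k hks hkc]
    have hpB := le_fiberMass hp0 b hks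
    have hpD := le_fiberMass hp0 d hks
    have hB := fiberMass_pos hp0 b hks (hp k hks)
    rw [hA, div_le_div_iff₀ (mul_pos hW hB) hW]
    simp only [G]
    split_ifs with h
    · change _ ≤ fiberMass s p d (d k) * _
      nlinarith [mul_le_mul_of_nonneg_left hpB (mul_nonneg (hp0 k hks |>.trans hpD) hW.le)]
    · have hDB : fiberMass s p d (d k) ≤ fiberMass s p b (b k) := by
        refine (forall_eq_or_forall_eq_of_pairwise (t := {i | i ∈ s ∧ d i = d k})
          (fun i hi j hj => hd i hi.1 j hj.1 (hi.2.trans hj.2.symm)) ⟨hks, rfl⟩).elim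
          (fun hA' => absurd (fun i hi hid => (hA' i ⟨hi, hid⟩).trans (ha k hks hkc)) h)
          (fun hB' => fiberMass_le_fiberMass hp0 fun i hi hid => hB' i ⟨hi, hid⟩)
      rw [sum_singleton]
      nlinarith [mul_le_mul_of_nonneg_left hDB (mul_nonneg (hp0 k hks) hW.le)]
  have hdisj : (F : Set ι).PairwiseDisjoint G := by
    intro j hj k hk hjk
    refine disjoint_left.2 fun i hij hik => hjk ?_
    exact hcd j (hF j hj).1 k (hF k hk).1 ((hF j hj).2.trans (hF k hk).2.symm)
      ((hG_d j i hij).symm.trans (hG_d k i hik))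
  calc _ ≤ ∑ k ∈ F, (∑ i ∈ G k, p i) / W := sum_le_sum hterm
    _ = (∑ i ∈ F.biUnion G, p i) / W := by rw [← sum_div, sum_biUnion hdisj]
    _ ≤ W / W := by
        gcongr
        exact sum_le_sum_of_subset_of_nonneg (biUnion_subset.2 hG_sub)
          (fun i hi _ => hp0 i (mem_filter.1 hi).1)
    _ = 1 := div_self hW.ne'

theorem sum_mul_fiberMass_div_le (hp : ∀ k ∈ s, 0 < p k)
    (hcd : ∀ j ∈ s, ∀ k ∈ s, c j = c k → d j = d k → j = k)
    (hc : ∀ j ∈ s, ∀ k ∈ s, c j = c k → a j = a k ∨ b j = b k)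
    (hd : ∀ j ∈ s, ∀ k ∈ s, d j = d k → a j = a k ∨ b j = b k) :
    ∑ k ∈ s, p k * (fiberMass s p c (c k) * fiberMass s p d (d k)) /
      (fiberMass s p a (a k) * fiberMass s p b (b k)) ≤ ∑ k ∈ s, p k := by
  set X : ι → ℝ := fun k =>
    fiberMass s p d (d k) / (fiberMass s p a (a k) * fiberMass s p b (b k))
  have hfiber : ∀ j ∈ s, ∑ k ∈ s with c k = c j, p k * X k ≤ 1 := by
    intro j hj
    rcases forall_eq_or_forall_eq_of_pairwise (t := {k | k ∈ s ∧ c k = c j})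
      (fun i hi k hk => hc i hi.1 k hk.1 (hi.2.trans hk.2.symm)) ⟨hj, rfl⟩ with ha | hb
    · simpa only [X, mul_div_assoc] using
        sum_fiber_le_one_of_forall_eq hp hcd hd hj fun k hk hkc => ha k ⟨hk, hkc⟩
    · simpa only [X, mul_div_assoc, mul_comm (fiberMass s p b _)] using
        sum_fiber_le_one_of_forall_eq hp hcd (fun i hi k hk hik => (hd i hi k hk hik).symm) hj
          fun k hk hkc => hb k ⟨hk, hkc⟩
  calc _ = ∑ k ∈ s, ∑ j ∈ s with c j = c k, p j * (p k * X k) := by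
        refine sum_congr rfl fun k _ => ?_
        rw [← sum_mul, fiberMass]
        ring
    _ = ∑ j ∈ s, ∑ k ∈ s with c k = c j, p j * (p k * X k) := by
        refine sum_comm' fun k j => ?_
        simp only [mem_filter]
        exact ⟨fun ⟨h₁, h₂, h₃⟩ => ⟨⟨h₁, h₃.symm⟩, h₂⟩, fun ⟨⟨h₁, h₂⟩, h₃⟩ => ⟨h₁, h₃, h₂.symm⟩⟩
    _ ≤ ∑ j ∈ s, p j := by
        refine sum_le_sum fun j hj => ?_
        rw [← mul_sum]
        exact mul_le_of_le_one_right (hp j hj).le (hfiber j hj)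

end FiberMass

section Entropy

open Finset

variable {ι α₁ α₂ γ₁ γ₂ : Type*} {π : ι → ℝ}

lemma pushforward_eq_fiberMass [DecidableEq α₁] {s : Finset ι} (hs : support π ⊆ s)
    (f : ι → α₁) : pushforward f π = fiberMass s π f := by
  ext z
  refine finsum_cond_eq_sum_of_cond_iff _ fun {j} hj => ?_
  simp only [Set.mem_ofPred_eq, mem_filter]
  exact ⟨fun h => ⟨hs hj, h⟩, And.right⟩

lemma finsum_pushforward (hfin : (support π).Finite) (f : ι → α₁) :
    ∑ᶠ z, pushforward f π z = ∑ᶠ i, π i := by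
  classical
  have hs : support π ⊆ hfin.toFinset := by simp
  rw [pushforward_eq_fiberMass hs, finsum_eq_sum_of_support_subset _ (support_fiberMass_subset f),
    sum_fiberMass_image, finsum_eq_sum_of_support_subset _ hs]

lemma relEntropy_pushforward [DecidableEq α₁] {s : Finset ι} (hs : support π ⊆ s)
    (f : ι → α₁) :
    relEntropy (pushforward f π) = ∑ k ∈ s, π k * Real.log (pushforward f π (f k)) := by
  rw [pushforward_eq_fiberMass hs, relEntropy,
    finsum_eq_sum_of_support_subset _ ((support_mul_subset_left _ _).trans
      (support_fiberMass_subset f))]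
  refine sum_image' _ fun k _ => ?_
  rw [fiberMass, sum_mul]
  exact sum_congr rfl fun j hj => by rw [(mem_filter.1 hj).2]; rfl

lemma mul_log_add_log_sub_le {p A B C D : ℝ} (hp : 0 ≤ p) (hA : 0 < A) (hB : 0 < B)
    (hC : 0 < C) (hD : 0 < D) :
    p * Real.log C + p * Real.log D - (p * Real.log A + p * Real.log B) ≤
      p * (C * D) / (A * B) - p := by
  have hlog := Real.log_le_sub_one_of_pos (show 0 < C * D / (A * B) by positivity)
  rw [Real.log_div (by positivity) (by positivity), Real.log_mul hC.ne' hD.ne',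
    Real.log_mul hA.ne' hB.ne'] at hlog
  calc _ = p * (Real.log C + Real.log D - (Real.log A + Real.log B)) := by ring
    _ ≤ p * (C * D / (A * B) - 1) := mul_le_mul_of_nonneg_left hlog hp
    _ = _ := by ring

theorem relEntropy_pushforward_add_le (hπ : ∀ i, 0 ≤ π i) (hfin : (support π).Finite)
    {a : ι → α₁} {b : ι → α₂} {c : ι → γ₁} {d : ι → γ₂}
    (hcd : ∀ j k, π j ≠ 0 → π k ≠ 0 → c j = c k → d j = d k → j = k)
    (hc : ∀ j k, π j ≠ 0 → π k ≠ 0 → c j = c k → a j = a k ∨ b j = b k)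
    (hd : ∀ j k, π j ≠ 0 → π k ≠ 0 → d j = d k → a j = a k ∨ b j = b k) :
    relEntropy (pushforward c π) + relEntropy (pushforward d π) ≤
      relEntropy (pushforward a π) + relEntropy (pushforward b π) := by
  classical
  set s := hfin.toFinset
  have hs : support π ⊆ s := by simp [s]
  have hmem : ∀ k ∈ s, π k ≠ 0 := by simp [s]
  have hpos : ∀ k ∈ s, 0 < π k := fun k hk => (hπ k).lt_of_ne' (hmem k hk)
  have hcore := sum_mul_fiberMass_div_le hpos
    (fun j hj k hk => hcd j k (hmem j hj) (hmem k hk))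
    (fun j hj k hk => hc j k (hmem j hj) (hmem k hk))
    (fun j hj k hk => hd j k (hmem j hj) (hmem k hk))
  rw [relEntropy_pushforward hs a, relEntropy_pushforward hs b, relEntropy_pushforward hs c,
    relEntropy_pushforward hs d]
  simp only [pushforward_eq_fiberMass hs]
  rw [← sub_nonpos, ← sum_add_distrib, ← sum_add_distrib, ← sum_sub_distrib]
  calc _ ≤ ∑ k ∈ s, (π k * (fiberMass s π c (c k) * fiberMass s π d (d k)) /
        (fiberMass s π a (a k) * fiberMass s π b (b k)) - π k) :=
        sum_le_sum fun k hk => mul_log_add_log_sub_le (hπ k)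
          (fiberMass_pos (fun j _ => hπ j) a hk (hpos k hk))
          (fiberMass_pos (fun j _ => hπ j) b hk (hpos k hk))
          (fiberMass_pos (fun j _ => hπ j) c hk (hpos k hk))
          (fiberMass_pos (fun j _ => hπ j) d hk (hpos k hk))
    _ ≤ 0 := by rw [sum_sub_distrib]; linarith

end Entropy

namespace IsPMF

variable {ι α : Type*} {π : ι → ℝ}

lemma le_one (hπ : IsPMF π) (i : ι) : π i ≤ 1 :=
  hπ.2.2 ▸ single_le_finsum i hπ.2.1 hπ.1

lemma relEntropy_nonpos (hπ : IsPMF π) : relEntropy π ≤ 0 := by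
  have h := finsum_nonneg fun i => Real.negMulLog_nonneg (hπ.1 i) (hπ.le_one i)
  simp only [Real.negMulLog, neg_mul, finsum_neg_distrib] at h
  exact neg_nonneg.1 h

lemma pushforward (hπ : IsPMF π) (f : ι → α) : IsPMF (pushforward f π) :=
  ⟨fun _ => finsum_nonneg fun i => finsum_nonneg fun _ => hπ.1 i,
    (hπ.2.1.image f).subset fun z hz => by
      obtain ⟨i, hi⟩ := exists_ne_zero_of_finsum_mem_ne_zero hz
      exact ⟨i, hi.2, hi.1⟩,
    (finsum_pushforward hπ.2.1 f).trans hπ.2.2⟩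

end IsPMF

lemma weighted_sum_le_of_sum_le {α β γ δ H₁ H₂ K₁ K₂ : ℝ} (hα : 0 ≤ α)
    (hmix : max α β ≤ min γ δ) (hH₁ : H₁ ≤ 0) (hH₂ : H₂ ≤ 0) (hK₁ : K₁ ≤ 0) (hK₂ : K₂ ≤ 0)
    (h : K₁ + K₂ ≤ H₁ + H₂) : γ * K₁ + δ * K₂ ≤ α * H₁ + β * H₂ := by
  have hmγ : max α β ≤ γ := hmix.trans (min_le_left γ δ)
  have hmδ : max α β ≤ δ := hmix.trans (min_le_right γ δ)
  linarith [mul_le_mul_of_nonpos_right hmγ hK₁, mul_le_mul_of_nonpos_right hmδ hK₂,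
    mul_le_mul_of_nonpos_right (le_max_left α β) hH₁,
    mul_le_mul_of_nonpos_right (le_max_right α β) hH₂,
    mul_le_mul_of_nonneg_left h (hα.trans (le_max_left α β))]

section Law

open MeasureTheory

variable {Ω A B : Type*} [MeasurableSpace Ω] {ρ : Measure Ω} {g : Ω → A}

noncomputable def law (ρ : Measure Ω) (g : Ω → A) : A → ℝ := fun a => (ρ (g ⁻¹' {a})).toReal

lemma law_nonneg (a : A) : 0 ≤ law ρ g a := ENNReal.toReal_nonneg

lemma support_law_subset {s : Set A} (hs : ∀ᵐ ω ∂ρ, g ω ∈ s) : support (law ρ g) ⊆ s := by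
  intro a ha
  by_contra has
  refine ha ?_
  rw [law, measure_mono_null (fun ω hω => by simp_all) (ae_iff.1 hs), ENNReal.toReal_zero]

lemma exists_eq_of_law_ne_zero {a : A} (ha : law ρ g a ≠ 0) {P : Ω → Prop}
    (hP : ∀ᵐ ω ∂ρ, P ω) : ∃ ω, g ω = a ∧ P ω :=
  Measure.exists_mem_of_measure_ne_zero_of_ae (s := g ⁻¹' {a})
    (fun h => ha (by rw [law, h, ENNReal.toReal_zero])) (ae_restrict_of_ae hP)

lemma pushforward_law [IsFiniteMeasure ρ] {s : Finset A} (hs : ∀ᵐ ω ∂ρ, g ω ∈ s)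
    (hg : ∀ a ∈ s, NullMeasurableSet (g ⁻¹' {a}) ρ) (f : A → B) :
    pushforward f (law ρ g) = law ρ (f ∘ g) := by
  classical
  ext z
  simp only [pushforward_eq_fiberMass (support_law_subset hs), fiberMass, law]
  rw [← ENNReal.toReal_sum fun a _ => measure_ne_top ρ _,
    ← measure_biUnion_finset₀
      ((Set.pairwiseDisjoint_fiber g _).subset (Set.subset_univ _)).aedisjoint
      fun a ha => hg a (Finset.mem_filter.1 ha).1]
  congr 1
  refine measure_congr (Filter.eventuallyEq_set.2 ?_)
  filter_upwards [hs] with ω hω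
  simp [hω]

section GenInv

open Finset

variable {A : Type*} {r : A → A → Prop} {μ : A → ℝ} {x y : A} {t : ℝ}

open Classical in
lemma cdf_eq_sum {s : Finset A} (hs : support μ ⊆ s) (x : A) :
    cdf r μ x = ∑ g ∈ s with r g x, μ g :=
  finsum_cond_eq_sum_of_cond_iff _ fun {g} hg => by
    simp only [Set.mem_ofPred_eq, mem_filter]
    exact ⟨fun h => ⟨hs hg, h⟩, And.right⟩

open Classical in
lemma cdf_eq_add_sum [Std.Refl r] {s : Finset A} (hs : support μ ⊆ s) (x : A) :
    cdf r μ x = μ x + ∑ g ∈ s with r g x ∧ g ≠ x, μ g := by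
  have hx : x ∈ (insert x s).filter (r · x) := mem_filter.2 ⟨mem_insert_self x s, refl_of r x⟩
  rw [cdf_eq_sum (hs.trans (coe_subset.2 (subset_insert x s))), ← add_sum_erase _ _ hx]
  congr 1
  refine sum_congr ?_ fun _ _ => rfl
  ext g
  simp only [mem_erase, mem_filter, mem_insert]
  tauto

lemma le_cdf_self [Std.Refl r] (h0 : ∀ x, 0 ≤ μ x) (hfin : (support μ).Finite) (x : A) :
    μ x ≤ cdf r μ x := by
  classical
  rw [cdf_eq_add_sum (s := hfin.toFinset) (by simp) x]
  exact le_add_of_nonneg_right (sum_nonneg fun g _ => h0 g)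

lemma cdf_le_one (hμ : IsPMF μ) (x : A) : cdf r μ x ≤ 1 := by
  classical
  have hs : support μ ⊆ hμ.2.1.toFinset := by simp
  rw [cdf_eq_sum hs]
  calc _ ≤ ∑ g ∈ hμ.2.1.toFinset, μ g :=
        sum_le_sum_of_subset_of_nonneg (filter_subset _ _) fun g _ _ => hμ.1 g
    _ = 1 := by rw [← finsum_eq_sum_of_support_subset _ hs, hμ.2.2]

lemma cdf_add_le_cdf [IsLinearOrder A r] (h0 : ∀ x, 0 ≤ μ x) (hfin : (support μ).Finite)
    (hyx : r y x) (hne : y ≠ x) : cdf r μ y + μ x ≤ cdf r μ x := by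
  classical
  have hs : support μ ⊆ hfin.toFinset := by simp
  rw [cdf_eq_add_sum hs x, cdf_eq_sum hs y, add_comm]
  refine add_le_add_right (sum_le_sum_of_subset_of_nonneg (fun g hg => ?_) fun g _ _ => h0 g) _
  obtain ⟨hgs, hgy⟩ := mem_filter.1 hg
  refine mem_filter.2 ⟨hgs, trans_of r hgy hyx, ?_⟩
  rintro rfl
  exact hne (antisymm hyx hgy)

lemma rel_of_cdf_sub_lt [IsLinearOrder A r] (h0 : ∀ x, 0 ≤ μ x) (hfin : (support μ).Finite)
    (hx : cdf r μ x - μ x < t) (hy : t ≤ cdf r μ y) : r x y := by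
  by_contra hxy
  have hne : y ≠ x := by
    rintro rfl
    exact hxy (refl_of r y)
  linarith [cdf_add_le_cdf h0 hfin ((total_of r x y).resolve_left hxy) hne]

lemma genInv_eq_of_cdf_sub_lt [Zero A] [IsLinearOrder A r] (h0 : ∀ x, 0 ≤ μ x)
    (hfin : (support μ).Finite) (hx : cdf r μ x - μ x < t) (hx' : t ≤ cdf r μ x) :
    genInv r μ t = x := by
  have hex : ∃ x, t ≤ cdf r μ x ∧ ∀ y, t ≤ cdf r μ y → r x y :=
    ⟨x, hx', fun y hy => rel_of_cdf_sub_lt h0 hfin hx hy⟩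
  rw [genInv, dif_pos hex]
  exact antisymm (hex.choose_spec.2 x hx') (rel_of_cdf_sub_lt h0 hfin hx hex.choose_spec.1)

/-- The `r`-least support point `x` with `t ≤ F(x)` works: if `t ≤ F(x) - μ(x)`, the
`r`-greatest support point strictly below `x` would also have `t ≤ F`. -/
lemma exists_cdf_sub_lt_le [IsLinearOrder A r] (hμ : IsPMF μ) (ht0 : 0 < t) (ht1 : t ≤ 1) :
    ∃ x, cdf r μ x - μ x < t ∧ t ≤ cdf r μ x := by
  classical
  set s := hμ.2.1.toFinset
  have hs : support μ ⊆ s := by simp [s]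
  have hsum : ∑ g ∈ s, μ g = 1 := by rw [← hμ.2.2, finsum_eq_sum_of_support_subset _ hs]
  obtain ⟨m, hm, hmax⟩ :=
    s.exists_forall_rel (r := r) (nonempty_of_sum_ne_zero (f := μ) (hsum ▸ one_ne_zero))
  have hm1 : cdf r μ m = 1 := by rw [cdf_eq_sum hs, filter_true_of_mem hmax, hsum]
  obtain ⟨x, hx, hxmin⟩ := (s.filter (t ≤ cdf r μ ·)).exists_forall_rel (r := swap r)
    ⟨m, mem_filter.2 ⟨hm, hm1 ▸ ht1⟩⟩
  refine ⟨x, ?_, (mem_filter.1 hx).2⟩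
  by_contra! hle
  rw [cdf_eq_add_sum hs x, add_sub_cancel_left] at hle
  obtain ⟨z, hz, hzmax⟩ := (s.filter fun g => r g x ∧ g ≠ x).exists_forall_rel (r := r)
    (nonempty_of_sum_ne_zero (ht0.trans_le hle).ne')
  obtain ⟨hzs, hzx, hne⟩ := mem_filter.1 hz
  have htz : t ≤ cdf r μ z := by
    rw [cdf_eq_sum hs]
    exact hle.trans (sum_le_sum_of_subset_of_nonneg
      (fun g hg => mem_filter.2 ⟨(mem_filter.1 hg).1, hzmax g hg⟩) fun g _ _ => hμ.1 g)
  exact hne (antisymm hzx (hxmin z (mem_filter.2 ⟨hzs, htz⟩)))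

lemma genInv_eq_iff [Zero A] [IsLinearOrder A r] (hμ : IsPMF μ) (ht0 : 0 < t) (ht1 : t ≤ 1) :
    genInv r μ t = x ↔ cdf r μ x - μ x < t ∧ t ≤ cdf r μ x := by
  obtain ⟨y, hy, hy'⟩ := exists_cdf_sub_lt_le (r := r) hμ ht0 ht1
  rw [genInv_eq_of_cdf_sub_lt hμ.1 hμ.2.1 hy hy']
  exact ⟨fun h => h ▸ ⟨hy, hy'⟩, fun ⟨hx, hx'⟩ =>
    antisymm (rel_of_cdf_sub_lt hμ.1 hμ.2.1 hy hx') (rel_of_cdf_sub_lt hμ.1 hμ.2.1 hx hy')⟩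

lemma genInv_ne_zero [Zero A] [IsLinearOrder A r] (hμ : IsPMF μ) (ht0 : 0 < t) (ht1 : t ≤ 1) :
    μ (genInv r μ t) ≠ 0 := by
  have h := (genInv_eq_iff (r := r) hμ ht0 ht1).1 rfl
  linarith

lemma genInv_mono [Zero A] [IsLinearOrder A r] (hμ : IsPMF μ) {t' : ℝ} (ht0 : 0 < t)
    (htt' : t ≤ t') (ht'1 : t' ≤ 1) : r (genInv r μ t) (genInv r μ t') :=
  rel_of_cdf_sub_lt hμ.1 hμ.2.1 ((genInv_eq_iff (r := r) hμ ht0 (htt'.trans ht'1)).1 rfl).1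
    (htt'.trans ((genInv_eq_iff (r := r) hμ (ht0.trans_le htt') ht'1).1 rfl).2)

end GenInv

section MonotoneCoupling

open MeasureTheory Set

variable {A : Type*} [Zero A] {r : A → A → Prop} {μ ν : A → ℝ}

lemma monotoneCoupling_eq_law (μ ν : A → ℝ) :
    monotoneCoupling r μ ν =
      law (volume.restrict (Ioo 0 1)) fun t => (genInv r μ t, genInv r ν t) := by
  ext p
  simp only [monotoneCoupling, law, preimage, mem_singleton_iff, Prod.ext_iff]

variable [IsLinearOrder A r]

lemma genInv_preimage_ae_eq (hμ : IsPMF μ) (x : A) :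
    genInv r μ ⁻¹' {x} =ᵐ[volume.restrict (Ioo 0 1)] Ioc (cdf r μ x - μ x) (cdf r μ x) := by
  refine Filter.eventuallyEq_set.2 ?_
  filter_upwards [ae_restrict_mem measurableSet_Ioo] with t ht
  exact genInv_eq_iff hμ ht.1 ht.2.le

lemma law_genInv (hμ : IsPMF μ) : law (volume.restrict (Ioo 0 1)) (genInv r μ) = μ := by
  ext x
  rw [law, measure_congr (genInv_preimage_ae_eq hμ x), Measure.restrict_congr_set Ioo_ae_eq_Ioc,
    Measure.restrict_apply measurableSet_Ioc, Ioc_inter_Ioc,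
    max_eq_left (sub_nonneg.2 (le_cdf_self hμ.1 hμ.2.1 x)), min_eq_left (cdf_le_one hμ x),
    Real.volume_Ioc, sub_sub_cancel, ENNReal.toReal_ofReal (hμ.1 x)]

lemma ae_genInv_mem (hμ : IsPMF μ) (hν : IsPMF ν) :
    ∀ᵐ t ∂volume.restrict (Ioo 0 1),
      (genInv r μ t, genInv r ν t) ∈ hμ.2.1.toFinset ×ˢ hν.2.1.toFinset := by
  filter_upwards [ae_restrict_mem measurableSet_Ioo] with t ht
  simpa using ⟨genInv_ne_zero hμ ht.1 ht.2.le, genInv_ne_zero hν ht.1 ht.2.le⟩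

lemma pushforward_monotoneCoupling (hμ : IsPMF μ) (hν : IsPMF ν) {B : Type*} (f : A × A → B) :
    pushforward f (monotoneCoupling r μ ν) =
      law (volume.restrict (Ioo 0 1)) (f ∘ fun t => (genInv r μ t, genInv r ν t)) := by
  have : IsFiniteMeasure (volume.restrict (Ioo (0 : ℝ) 1)) :=
    isFiniteMeasure_restrict.2 (by simp)
  refine monotoneCoupling_eq_law (r := r) μ ν ▸ pushforward_law (ae_genInv_mem hμ hν)
    (fun p _ => ?_) f
  rw [← singleton_prod_singleton, mk_preimage_prod]
  exact (measurableSet_Ioc.nullMeasurableSet.congr (genInv_preimage_ae_eq hμ p.1).symm).inter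
    (measurableSet_Ioc.nullMeasurableSet.congr (genInv_preimage_ae_eq hν p.2).symm)

lemma pushforward_fst_monotoneCoupling (hμ : IsPMF μ) (hν : IsPMF ν) :
    pushforward Prod.fst (monotoneCoupling r μ ν) = μ :=
  (pushforward_monotoneCoupling hμ hν _).trans (law_genInv hμ)

lemma pushforward_snd_monotoneCoupling (hμ : IsPMF μ) (hν : IsPMF ν) :
    pushforward Prod.snd (monotoneCoupling r μ ν) = ν :=
  (pushforward_monotoneCoupling hμ hν _).trans (law_genInv hν)

lemma isPMF_monotoneCoupling (hμ : IsPMF μ) (hν : IsPMF ν) :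
    IsPMF (monotoneCoupling r μ ν) := by
  have hfin : (support (monotoneCoupling r μ ν)).Finite :=
    (Finset.finite_toSet _).subset
      (monotoneCoupling_eq_law (r := r) μ ν ▸ support_law_subset (ae_genInv_mem hμ hν))
  refine ⟨fun p => monotoneCoupling_eq_law (r := r) μ ν ▸ law_nonneg p, hfin, ?_⟩
  rw [← finsum_pushforward hfin Prod.fst, pushforward_fst_monotoneCoupling hμ hν, hμ.2.2]

lemma monotoneCoupling_comparable (hμ : IsPMF μ) (hν : IsPMF ν) {v w : A × A}
    (hv : monotoneCoupling r μ ν v ≠ 0) (hw : monotoneCoupling r μ ν w ≠ 0) :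
    (r v.1 w.1 ∧ r v.2 w.2) ∨ (r w.1 v.1 ∧ r w.2 v.2) := by
  rw [monotoneCoupling_eq_law] at hv hw
  obtain ⟨t, rfl, ht⟩ := exists_eq_of_law_ne_zero hv (ae_restrict_mem measurableSet_Ioo)
  obtain ⟨t', rfl, ht'⟩ := exists_eq_of_law_ne_zero hw (ae_restrict_mem measurableSet_Ioo)
  rcases le_total t t' with h | h
  · exact Or.inl ⟨genInv_mono hμ ht.1 h ht'.2.le, genInv_mono hν ht.1 h ht'.2.le⟩
  · exact Or.inr ⟨genInv_mono hμ ht'.1 h ht.2.le, genInv_mono hν ht'.1 h ht.2.le⟩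

end MonotoneCoupling

section OrderedGroup

variable {G : Type*} [AddCommGroup G] {r : G → G → Prop} {x₁ x₂ y₁ y₂ u : G}

lemma TotalAdditiveOrdering.isLinearOrder (hr : TotalAdditiveOrdering r) : IsLinearOrder G r where
  refl := hr.1
  antisymm := hr.2.1
  trans := hr.2.2.1
  total := hr.2.2.2.1

lemma TotalAdditiveOrdering.rel_of_add_rel_add (hr : TotalAdditiveOrdering r) {c : G}
    (h : r (x₁ + c) (x₂ + c)) : r x₁ x₂ := by
  simpa using hr.2.2.2.2 _ _ (-c) h

lemma IsMinimalPositive.add_rel (hr : TotalAdditiveOrdering r) (hu : IsMinimalPositive r u)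
    (h : r x₁ x₂) (hne : x₁ ≠ x₂) : r (x₁ + u) x₂ := by
  have hpos : r 0 (x₂ - x₁) := hr.rel_of_add_rel_add (c := x₁) (by simpa using h)
  have h' := hr.2.2.2.2 _ _ x₁ (hu.2 _ hpos (sub_ne_zero.2 hne.symm))
  rwa [sub_add_cancel, add_comm] at h'

lemma TranslationEquivariant.add_sub {T : G → G → G} (hT : TranslationEquivariant T) :
    TranslationEquivariant fun x y => x + y - T x y := by
  intro x y z
  simp only [hT x y z]
  abel

lemma eq_or_eq_of_apply_eq (hr : TotalAdditiveOrdering r) (hu : IsMinimalPositive r u)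
    {T : G → G → G} (hT : TranslationEquivariant T)
    (hmono : ∀ x₁ x₂ y₁ y₂, r x₁ x₂ → r y₁ y₂ → r (T x₁ y₁) (T x₂ y₂))
    (hxy : (r x₁ x₂ ∧ r y₁ y₂) ∨ (r x₂ x₁ ∧ r y₂ y₁)) (h : T x₁ y₁ = T x₂ y₂) :
    x₁ = x₂ ∨ y₁ = y₂ := by
  wlog hle : r x₁ x₂ ∧ r y₁ y₂ generalizing x₁ x₂ y₁ y₂
  · exact (this hxy.symm h.symm (hxy.resolve_left hle)).imp Eq.symm Eq.symm
  by_contra! ⟨hx, hy⟩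
  have hTu := hmono _ _ _ _ (hu.add_rel hr hle.1 hx) (hu.add_rel hr hle.2 hy)
  rw [hT, h] at hTu
  exact hu.1.2 (hr.2.1 _ _ (hr.rel_of_add_rel_add (by simpa [add_comm] using hTu)) hu.1.1)

lemma eq_and_eq_of_add_eq (hr : TotalAdditiveOrdering r)
    (hxy : (r x₁ x₂ ∧ r y₁ y₂) ∨ (r x₂ x₁ ∧ r y₂ y₁)) (h : x₁ + y₁ = x₂ + y₂) :
    x₁ = x₂ ∧ y₁ = y₂ := by
  wlog hle : r x₁ x₂ ∧ r y₁ y₂ generalizing x₁ x₂ y₁ y₂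
  · exact (this hxy.symm h.symm (hxy.resolve_left hle)).imp Eq.symm Eq.symm
  have h' := hr.2.2.2.2 _ _ x₂ hle.2
  rw [add_comm y₁, add_comm y₂, ← h] at h'
  have hx : x₁ = x₂ := hr.2.1 _ _ hle.1 (hr.rel_of_add_rel_add h')
  exact ⟨hx, add_left_cancel (hx ▸ h)⟩

end OrderedGroup

theorem entropy_inequality_ordered_group_general
    {l : ℕ} (r : (Fin l → ℤ) → (Fin l → ℤ) → Prop)
    (hr : TotalAdditiveOrdering r) (hmin : ∃ u, IsMinimalPositive r u)
    (Tm : (Fin l → ℤ) → (Fin l → ℤ) → (Fin l → ℤ))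
    (hTE : TranslationEquivariant Tm)
    (hmono : ∀ x₁ x₂ y₁ y₂, r x₁ x₂ → r y₁ y₂ → r (Tm x₁ y₁) (Tm x₂ y₂))
    (hmono' : ∀ x₁ x₂ y₁ y₂, r x₁ x₂ → r y₁ y₂ →
      r (x₁ + y₁ - Tm x₁ y₁) (x₂ + y₂ - Tm x₂ y₂))
    (α β γ δ : ℝ) (hα : 0 < α)
    (hmix : max α β ≤ min γ δ)
    (μ ν : (Fin l → ℤ) → ℝ) (hμ : IsPMF μ) (hν : IsPMF ν) :
    α * relEntropy μ + β * relEntropy ν ≥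
      γ * relEntropy (pushforward (fun p => Tm p.1 p.2) (monotoneCoupling r μ ν)) +
      δ * relEntropy (pushforward (fun p => p.1 + p.2 - Tm p.1 p.2)
        (monotoneCoupling r μ ν)) := by
  obtain ⟨u, hu⟩ := hmin
  have := hr.isLinearOrder
  have hπ := isPMF_monotoneCoupling (r := r) hμ hν
  have hchain := fun {v w} => monotoneCoupling_comparable (r := r) hμ hν (v := v) (w := w)
  have hent := relEntropy_pushforward_add_le hπ.1 hπ.2.1 (a := Prod.fst) (b := Prod.snd)
    (c := fun p => Tm p.1 p.2) (d := fun p => p.1 + p.2 - Tm p.1 p.2)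
    (fun v w hv hw hm hp => Prod.ext_iff.2 <| eq_and_eq_of_add_eq hr (hchain hv hw)
      (by rwa [hm, sub_left_inj] at hp))
    (fun v w hv hw h => eq_or_eq_of_apply_eq hr hu hTE hmono (hchain hv hw) h)
    (fun v w hv hw h => eq_or_eq_of_apply_eq hr hu hTE.add_sub hmono' (hchain hv hw) h)
  rw [pushforward_fst_monotoneCoupling hμ hν, pushforward_snd_monotoneCoupling hμ hν] at hent
  exact weighted_sum_le_of_sum_le hα.le hmix hμ.relEntropy_nonpos hν.relEntropy_nonpos
    (hπ.pushforward _).relEntropy_nonpos (hπ.pushforward _).relEntropy_nonpos hent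

/-- **Proposition (entropy inequality for totally ordered groups).** For the monotone
coupling `π` of `μ` and `ν` on `G = ℤ^l`, with `κ± = π ∘ T±⁻¹`,
`α H(μ|m) + β H(ν|m) ≥ γ H(κ₋|m) + δ H(κ₊|m)`. -/
theorem entropy_inequality_ordered_group
    {l : ℕ} (r : (Fin l → ℤ) → (Fin l → ℤ) → Prop)
    (hr : TotalAdditiveOrdering r) (hmin : ∃ u, IsMinimalPositive r u)
    (Tm : (Fin l → ℤ) → (Fin l → ℤ) → (Fin l → ℤ))
    (hTE : TranslationEquivariant Tm)
    (hmono : ∀ x₁ x₂ y₁ y₂, r x₁ x₂ → r y₁ y₂ → r (Tm x₁ y₁) (Tm x₂ y₂))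
    (hmono' : ∀ x₁ x₂ y₁ y₂, r x₁ x₂ → r y₁ y₂ →
      r (x₁ + y₁ - Tm x₁ y₁) (x₂ + y₂ - Tm x₂ y₂))
    (α β γ δ : ℝ) (hα : 0 < α) (hβ : 0 < β) (hγ : 0 < γ) (hδ : 0 < δ)
    (hmix : max α β ≤ min γ δ)
    (μ ν : (Fin l → ℤ) → ℝ) (hμ : IsPMF μ) (hν : IsPMF ν) :
    α * relEntropy μ + β * relEntropy ν ≥
      γ * relEntropy (pushforward (fun p => Tm p.1 p.2) (monotoneCoupling r μ ν)) +
      δ * relEntropy (pushforward (fun p => p.1 + p.2 - Tm p.1 p.2)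
        (monotoneCoupling r μ ν)) :=
  entropy_inequality_ordered_group_general r hr hmin Tm hTE hmono hmono' α β γ δ hα hmix μ ν hμ hν
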